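/- There is a positive integer M such that for every integer m ≥ M, the set { (⌊(x − z + 3 : ℚ)/m⌋, ⌊(−z : ℚ)/m⌋, ⌊(−x − y + 2*z + 3 : ℚ)/m⌋) : x, y, z ∈ ℤ, 0 ≤ x < m, 0 ≤ y < m, 0 ≤ z < m } ⊆ ℤ³ equals the 15-element set { (0,0,0), (0,0,−1), (0,0,−2), (0,−1,0), (0,−1,−1), (0,−1,−2), (−1,−1,−1), (−1,−1,0), (−1,−1,1), (1,0,−1), (1,0,−2), (1,−1,−1), (1,−1,−2), (0,−1,1), (−1,−1,2) }. -/

import Mathlib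

/-!
Writing `⌊a / m⌋ = q` as `q * m ≤ a < (q + 1) * m` turns membership in the set into the
solvability of a system of linear inequalities in `x, y, z ∈ [0, m)`. Since the three numerators
lie in `[-m, 2m)`, `[-m, m)` and `[-2m, 3m)`, only `3 · 2 · 5` candidate
triples exist, and for each of them the system is decided by linear arithmetic once `m` is large.
The fifteen realised triples are witnessed by points `(x, y, z)` within distance `12` of the
corners of the box.
-/

theorem Int.floor_intCast_div_intCast_eq_iff {a m q : ℤ} (hm : 0 < m) :
    ⌊(a : ℚ) / m⌋ = q ↔ q * m ≤ a ∧ a < (q + 1) * m := by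
  have hm' : (0 : ℚ) < m := by exact_mod_cast hm
  rw [Int.floor_eq_iff, le_div_iff₀ hm', div_lt_iff₀ hm']
  norm_cast

theorem Int.le_of_mul_le_of_lt_add_one_mul {q k m a : ℤ} (hm : 0 < m) (hq : q * m ≤ a)
    (hk : a < (k + 1) * m) : q ≤ k :=
  Int.lt_add_one_iff.mp (lt_of_mul_lt_mul_right (hq.trans_lt hk) hm.le)

/-- The coefficient triples `(q₄, q₅, q₆)` produced by Thomsen's algorithm for `ω_X^{-3}`. -/
def thomsenCoeffs (m : ℤ) : Set (ℤ × ℤ × ℤ) :=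
  {p | ∃ x y z : ℤ, 0 ≤ x ∧ x < m ∧ 0 ≤ y ∧ y < m ∧ 0 ≤ z ∧ z < m ∧
    p = (⌊((x - z + 3 : ℤ) : ℚ) / (m : ℚ)⌋, ⌊((-z : ℤ) : ℚ) / (m : ℚ)⌋,
      ⌊((-x - y + 2 * z + 3 : ℤ) : ℚ) / (m : ℚ)⌋)}

/-- The first nine triples are the summands `𝔇` of `F_{m*}O_X`, the last six form `𝔇'`. -/
def limitCoeffs : Set (ℤ × ℤ × ℤ) :=
  {(0, 0, 0), (0, 0, -1), (0, 0, -2), (0, -1, 0), (0, -1, -1), (0, -1, -2),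
    (-1, -1, -1), (-1, -1, 0), (-1, -1, 1), (1, 0, -1), (1, 0, -2),
    (1, -1, -1), (1, -1, -2), (0, -1, 1), (-1, -1, 2)}

theorem mk_mem_thomsenCoeffs_iff {m q₄ q₅ q₆ : ℤ} (hm : 0 < m) :
    (q₄, q₅, q₆) ∈ thomsenCoeffs m ↔ ∃ x y z : ℤ,
      0 ≤ x ∧ x < m ∧ 0 ≤ y ∧ y < m ∧ 0 ≤ z ∧ z < m ∧
      (q₄ * m ≤ x - z + 3 ∧ x - z + 3 < (q₄ + 1) * m) ∧
      (q₅ * m ≤ -z ∧ -z < (q₅ + 1) * m) ∧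
      (q₆ * m ≤ -x - y + 2 * z + 3 ∧ -x - y + 2 * z + 3 < (q₆ + 1) * m) := by
  simp only [thomsenCoeffs, Set.mem_ofPred_eq, Prod.mk.injEq, eq_comm (a := q₄), eq_comm (a := q₅),
    eq_comm (a := q₆), Int.floor_intCast_div_intCast_eq_iff hm]

theorem thomsenCoeffs_subset {m : ℤ} (hm : 20 ≤ m) : thomsenCoeffs m ⊆ limitCoeffs := by
  rintro ⟨q₄, q₅, q₆⟩ hq
  obtain ⟨x, y, z, hx₀, hxm, hy₀, hym, hz₀, hzm, ⟨h₄, h₄'⟩, ⟨h₅, h₅'⟩, ⟨h₆, h₆'⟩⟩ :=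
    (mk_mem_thomsenCoeffs_iff (by omega)).mp hq
  have hm₀ : 0 < m := by omega
  have : q₄ ≤ 1 := Int.le_of_mul_le_of_lt_add_one_mul hm₀ h₄ (k := 1) (by omega)
  have : -1 ≤ q₄ := Int.le_of_mul_le_of_lt_add_one_mul hm₀ (q := -1) (by omega) h₄'
  have : q₅ ≤ 0 := Int.le_of_mul_le_of_lt_add_one_mul hm₀ h₅ (k := 0) (by omega)
  have : -1 ≤ q₅ := Int.le_of_mul_le_of_lt_add_one_mul hm₀ (q := -1) (by omega) h₅'
  have : q₆ ≤ 2 := Int.le_of_mul_le_of_lt_add_one_mul hm₀ h₆ (k := 2) (by omega)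
  have : -2 ≤ q₆ := Int.le_of_mul_le_of_lt_add_one_mul hm₀ (q := -2) (by omega) h₆'
  simp only [limitCoeffs, Set.mem_insert_iff, Set.mem_singleton_iff, Prod.mk.injEq]
  interval_cases q₄ <;> interval_cases q₅ <;> interval_cases q₆ <;> first | decide | (exfalso; omega)

theorem limitCoeffs_subset {m : ℤ} (hm : 20 ≤ m) : limitCoeffs ⊆ thomsenCoeffs m := by
  intro p hp
  simp only [limitCoeffs, Set.mem_insert_iff, Set.mem_singleton_iff] at hp
  rcases hp with rfl | rfl | rfl | rfl | rfl | rfl | rfl | rfl | rfl | rfl | rfl | rfl | rfl |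
    rfl | rfl <;> rw [mk_mem_thomsenCoeffs_iff (by omega)]
  exacts [⟨0, 0, 0, by omega⟩, ⟨0, 4, 0, by omega⟩, ⟨m - 4, m - 1, 0, by omega⟩,
    ⟨0, 0, 1, by omega⟩, ⟨0, 6, 1, by omega⟩, ⟨m - 3, m - 1, 1, by omega⟩,
    ⟨0, 12, 4, by omega⟩, ⟨0, 0, 4, by omega⟩, ⟨0, 2, m - 1, by omega⟩,
    ⟨m - 3, 0, 0, by omega⟩, ⟨m - 1, 5, 0, by omega⟩, ⟨m - 1, 0, 1, by omega⟩,
    ⟨m - 1, 7, 1, by omega⟩, ⟨m - 4, 0, m - 1, by omega⟩, ⟨0, 0, m - 1, by omega⟩]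

/-- §5.2: for all sufficiently large `m`, the set `𝔇(ω_X^{-3})_m` of Thomsen
coefficient triples on the toric Fano 3-fold of type (11) equals an explicit
15-element set. -/
theorem stmt_13 :
    ∃ M : ℤ, 0 < M ∧ ∀ m : ℤ, M ≤ m →
      {p : ℤ × ℤ × ℤ | ∃ x y z : ℤ,
          0 ≤ x ∧ x < m ∧ 0 ≤ y ∧ y < m ∧ 0 ≤ z ∧ z < m ∧
          p = (⌊((x - z + 3 : ℤ) : ℚ) / (m : ℚ)⌋, ⌊((-z : ℤ) : ℚ) / (m : ℚ)⌋,
               ⌊((-x - y + 2 * z + 3 : ℤ) : ℚ) / (m : ℚ)⌋)} =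
      ({(0, 0, 0), (0, 0, -1), (0, 0, -2), (0, -1, 0), (0, -1, -1), (0, -1, -2),
        (-1, -1, -1), (-1, -1, 0), (-1, -1, 1), (1, 0, -1), (1, 0, -2),
        (1, -1, -1), (1, -1, -2), (0, -1, 1), (-1, -1, 2)} : Set (ℤ × ℤ × ℤ)) :=
  ⟨20, by norm_num, fun _ hm => (thomsenCoeffs_subset hm).antisymm (limitCoeffs_subset hm)⟩
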